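/- arXiv:2405.01619 — 2 statements merged into one kernel-verified Lean document; each statement's English description precedes it below -/
import Mathlib

section
/- Let n ≥ 1, γ > 0, v₀ > 0, vⱼ > 0 for j ∈ {1,…,n}, and Zᵢ ∈ ℝ. Let u, c₁,…,cₙ : ℝ³ → ℝ be differentiable at a point r with cᵢ(r) > 0 and 1 − γ ∑_{j=1}^n vⱼ cⱼ(r) > 0, and define c̄ᵢ : ℝ³ → ℝ by c̄ᵢ(r′) = cᵢ(r′) · exp(Zᵢ u(r′)) · (1 − γ ∑_{j=1}^n vⱼ cⱼ(r′))^{−vᵢ/v₀}. Then ∇cᵢ(r) + Zᵢ cᵢ(r) ∇u(r) + (vᵢ/v₀) cᵢ(r) · γ ∑_{j=1}^n vⱼ ∇cⱼ(r) / (1 − γ ∑_{j=1}^n vⱼ cⱼ(r)) = exp(−Zᵢ u(r)) · (1 − γ ∑_{j=1}^n vⱼ cⱼ(r))^{vᵢ/v₀} · ∇c̄ᵢ(r) (equality of vectors in ℝ³). -/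
/-!
By the product and chain rules, with `w = 1 - γ ∑ⱼ vⱼ cⱼ` and `p = vᵢ / v₀`,
`∇c̄ᵢ = e^{Zᵢ u} w^{-p} (∇cᵢ + Zᵢ cᵢ ∇u - p cᵢ ∇w / w)`, and `∇w = -γ ∑ⱼ vⱼ ∇cⱼ`.
The prefactor `e^{-Zᵢ u} w^{p}` cancels the exponential and the power exactly, since `w > 0`.
-/

namespace HasGradientAt

variable {F : Type*} [NormedAddCommGroup F] [InnerProductSpace ℝ F] [CompleteSpace F]
  {f g : F → ℝ} {f' g' x : F}

theorem mul (hf : HasGradientAt f f' x) (hg : HasGradientAt g g' x) :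
    HasGradientAt (fun y => f y * g y) (f x • g' + g x • f') x := by
  rw [hasGradientAt_iff_hasFDerivAt, map_add, map_smul, map_smul]
  exact hf.hasFDerivAt.mul hg.hasFDerivAt

theorem exp (hf : HasGradientAt f f' x) :
    HasGradientAt (fun y => Real.exp (f y)) (Real.exp (f x) • f') x := by
  rw [hasGradientAt_iff_hasFDerivAt, map_smul]
  exact hf.hasFDerivAt.exp

theorem rpow_const {p : ℝ} (hf : HasGradientAt f f' x) (hx : f x ≠ 0 ∨ 1 ≤ p) :
    HasGradientAt (fun y => f y ^ p) ((p * f x ^ (p - 1)) • f') x := by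
  rw [hasGradientAt_iff_hasFDerivAt, map_smul]
  exact hf.hasFDerivAt.rpow_const hx

theorem const_mul (c : ℝ) (hf : HasGradientAt f f' x) :
    HasGradientAt (fun y => c * f y) (c • f') x := by
  rw [hasGradientAt_iff_hasFDerivAt, map_smul]
  exact hf.hasFDerivAt.const_mul c

theorem const_sub (c : ℝ) (hf : HasGradientAt f f' x) :
    HasGradientAt (fun y => c - f y) (-f') x := by
  rw [hasGradientAt_iff_hasFDerivAt, map_neg]
  exact hf.hasFDerivAt.const_sub c

theorem fun_sum {ι : Type*} {s : Finset ι} {f : ι → F → ℝ} {f' : ι → F}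
    (hf : ∀ i ∈ s, HasGradientAt (f i) (f' i) x) :
    HasGradientAt (fun y => ∑ i ∈ s, f i y) (∑ i ∈ s, f' i) x := by
  rw [hasGradientAt_iff_hasFDerivAt, map_sum]
  exact HasFDerivAt.fun_sum hf

end HasGradientAt

section Slotboom

variable {F : Type*} [NormedAddCommGroup F] [InnerProductSpace ℝ F] [CompleteSpace F]
  {a b w : F → ℝ} {a' b' w' x : F}

theorem HasGradientAt.mul_exp_mul_rpow_neg (ha : HasGradientAt a a' x)
    (hb : HasGradientAt b b' x) (hw : HasGradientAt w w' x) (hwx : 0 < w x) (p : ℝ) :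
    HasGradientAt (fun y => a y * Real.exp (b y) * w y ^ (-p))
      ((Real.exp (b x) * w x ^ (-p)) • (a' + a x • b' - (p * a x / w x) • w')) x := by
  convert (ha.mul hb.exp).mul (hw.rpow_const (p := -p) (Or.inl hwx.ne')) using 1
  rw [show -p - 1 = -p + -1 by ring, Real.rpow_add hwx, Real.rpow_neg_one]
  have : w x ≠ 0 := hwx.ne'
  match_scalars <;> field_simp

theorem exp_neg_mul_rpow_smul_gradient_mul_exp_mul_rpow_neg (ha : HasGradientAt a a' x)
    (hb : HasGradientAt b b' x) (hw : HasGradientAt w w' x) (hwx : 0 < w x) (p : ℝ) :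
    (Real.exp (-b x) * w x ^ p) • gradient (fun y => a y * Real.exp (b y) * w y ^ (-p)) x =
      a' + a x • b' - (p * a x / w x) • w' := by
  have hcancel : Real.exp (-b x) * w x ^ p * (Real.exp (b x) * w x ^ (-p)) = 1 := by
    rw [mul_mul_mul_comm, ← Real.exp_add, ← Real.rpow_add hwx]
    simp
  rw [(ha.mul_exp_mul_rpow_neg hb hw hwx p).gradient, smul_smul, hcancel, one_smul]

end Slotboom

theorem slotboom_gradient_relationship_general
    (n : ℕ) (γ v₀ : ℝ)
    (v : Fin n → ℝ) (Z : Fin n → ℝ) (i : Fin n)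
    (u : EuclideanSpace ℝ (Fin 3) → ℝ)
    (c : Fin n → EuclideanSpace ℝ (Fin 3) → ℝ)
    (r : EuclideanSpace ℝ (Fin 3))
    (hu : DifferentiableAt ℝ u r)
    (hc : ∀ j, DifferentiableAt ℝ (c j) r)
    (hw : 0 < 1 - γ * ∑ j, v j * c j r)
    (cbar : EuclideanSpace ℝ (Fin 3) → ℝ)
    (hcbar : cbar = fun r' => c i r' * Real.exp (Z i * u r') *
        (1 - γ * ∑ j, v j * c j r') ^ (-(v i / v₀))) :
    gradient (c i) r + (Z i * c i r) • gradient u r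
        + ((v i / v₀) * c i r * γ / (1 - γ * ∑ j, v j * c j r)) •
            ∑ j, v j • gradient (c j) r =
      (Real.exp (-(Z i * u r)) *
          (1 - γ * ∑ j, v j * c j r) ^ (v i / v₀)) • gradient cbar r := by
  have hwater : HasGradientAt (fun r' => 1 - γ * ∑ j, v j * c j r')
      (-(γ • ∑ j, v j • gradient (c j) r)) r :=
    (HasGradientAt.fun_sum fun j _ => (hc j).hasGradientAt.const_mul (v j)).const_mul γ
      |>.const_sub 1
  rw [hcbar, exp_neg_mul_rpow_smul_gradient_mul_exp_mul_rpow_neg (hc i).hasGradientAt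
    (hu.hasGradientAt.const_mul (Z i)) hwater hw]
  module

/-- The key relationship identity (c_bar_c_relationship2) in the proof of Theorem 1:
`∇cᵢ + Zᵢ cᵢ ∇u + (vᵢ/v₀) cᵢ γ ∑ⱼ vⱼ ∇cⱼ / (1 − γ ∑ⱼ vⱼ cⱼ)
  = e^{−Zᵢ u} (1 − γ ∑ⱼ vⱼ cⱼ)^{vᵢ/v₀} ∇c̄ᵢ` at the point `r`, where
`c̄ᵢ = cᵢ e^{Zᵢ u} (1 − γ ∑ⱼ vⱼ cⱼ)^{−vᵢ/v₀}` is the size-modified Slotboom variable. -/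
theorem slotboom_gradient_relationship
    (n : ℕ) (hn : 1 ≤ n) (γ v₀ : ℝ) (hγ : 0 < γ) (hv₀ : 0 < v₀)
    (v : Fin n → ℝ) (hv : ∀ j, 0 < v j) (Z : Fin n → ℝ) (i : Fin n)
    (u : EuclideanSpace ℝ (Fin 3) → ℝ)
    (c : Fin n → EuclideanSpace ℝ (Fin 3) → ℝ)
    (r : EuclideanSpace ℝ (Fin 3))
    (hu : DifferentiableAt ℝ u r)
    (hc : ∀ j, DifferentiableAt ℝ (c j) r)
    (hci : 0 < c i r)
    (hw : 0 < 1 - γ * ∑ j, v j * c j r)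
    (cbar : EuclideanSpace ℝ (Fin 3) → ℝ)
    (hcbar : cbar = fun r' => c i r' * Real.exp (Z i * u r') *
        (1 - γ * ∑ j, v j * c j r') ^ (-(v i / v₀))) :
    gradient (c i) r + (Z i * c i r) • gradient u r
        + ((v i / v₀) * c i r * γ / (1 - γ * ∑ j, v j * c j r)) •
            ∑ j, v j • gradient (c j) r =
      (Real.exp (-(Z i * u r)) *
          (1 - γ * ∑ j, v j * c j r) ^ (v i / v₀)) • gradient cbar r :=
  slotboom_gradient_relationship_general n γ v₀ v Z i u c r hu hc hw cbar hcbar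
end

section
/- Let n ≥ 1, γ > 0, v₀ > 0, vⱼ > 0 for j ∈ {1,…,n}, and Zᵢ ∈ ℝ. Let 𝒟ᵢ : ℝ³ → ℝ be any function and let u, c₁,…,cₙ : ℝ³ → ℝ be differentiable at a point r with cᵢ(r) > 0 and 1 − γ ∑_{j=1}^n vⱼ cⱼ(r) > 0. Define the size-modified flux Jᵢ(r) = −𝒟ᵢ(r) · [ ∇cᵢ(r) + Zᵢ cᵢ(r) ∇u(r) + (vᵢ/v₀) cᵢ(r) · γ ∑_{j=1}^n vⱼ ∇cⱼ(r) / (1 − γ ∑_{j=1}^n vⱼ cⱼ(r)) ], the Slotboom variable c̄ᵢ(r′) = cᵢ(r′) exp(Zᵢ u(r′)) (1 − γ ∑_{j=1}^n vⱼ cⱼ(r′))^{−vᵢ/v₀}, and the transformed diffusion coefficient 𝒟̂ᵢ(r) = 𝒟ᵢ(r) · exp(−Zᵢ u(r)) · (1 − γ ∑_{j=1}^n vⱼ cⱼ(r))^{vᵢ/v₀}. Then Jᵢ(r) = −𝒟̂ᵢ(r) ∇c̄ᵢ(r). -/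
/-!
Writing w = 1 − γ ∑ⱼ vⱼ cⱼ, the Slotboom variable is cᵢ times the factor e^{Zᵢ u} w^{−vᵢ/v₀}.
The product and chain rules give ∇c̄ᵢ = e^{Zᵢ u} w^{−vᵢ/v₀} (∇cᵢ + Zᵢ cᵢ ∇u − (vᵢ/v₀)(cᵢ/w) ∇w),
which is that factor times the bracket of the flux since ∇w = −γ ∑ⱼ vⱼ ∇cⱼ, while 𝒟̂ᵢ is 𝒟ᵢ
divided by the same factor.
-/

open Real Finset

section

variable {E : Type*} [NormedAddCommGroup E] [NormedSpace ℝ E] {f g w : E → ℝ}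
  {f' g' w' : StrongDual ℝ E} {x : E}

theorem HasFDerivAt.mul_exp_const_mul_mul_rpow_neg (hf : HasFDerivAt f f' x)
    (hg : HasFDerivAt g g' x) (hw : HasFDerivAt w w' x) (hwx : w x ≠ 0) (z a : ℝ) :
    HasFDerivAt (fun y => f y * Real.exp (z * g y) * w y ^ (-a))
      ((Real.exp (z * g x) * w x ^ (-a)) • (f' + (z * f x) • g' - (a * f x / w x) • w')) x := by
  refine ((hf.mul (hg.const_mul z).exp).mul (hw.rpow_const (Or.inl hwx))).congr_fderiv ?_
  rw [Pi.mul_apply, rpow_sub_one hwx]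
  match_scalars <;> field_simp

end

section

variable {F : Type*} [NormedAddCommGroup F] [InnerProductSpace ℝ F] [CompleteSpace F]
  {x : F}

theorem HasGradientAt.mul_exp_const_mul_mul_rpow_neg {f g w : F → ℝ} {f' g' w' : F}
    (hf : HasGradientAt f f' x) (hg : HasGradientAt g g' x) (hw : HasGradientAt w w' x)
    (hwx : w x ≠ 0) (z a : ℝ) :
    HasGradientAt (fun y => f y * Real.exp (z * g y) * w y ^ (-a))
      ((Real.exp (z * g x) * w x ^ (-a)) • (f' + (z * f x) • g' - (a * f x / w x) • w')) x := by
  rw [hasGradientAt_iff_hasFDerivAt] at *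
  simpa using HasFDerivAt.mul_exp_const_mul_mul_rpow_neg hf hg hw hwx z a

theorem HasGradientAt.const_sub_mul_sum {ι : Type*} (s : Finset ι) (b γ : ℝ) (v : ι → ℝ)
    {c : ι → F → ℝ} {c' : ι → F} (hc : ∀ j ∈ s, HasGradientAt (c j) (c' j) x) :
    HasGradientAt (fun y => b - γ * ∑ j ∈ s, v j * c j y) (-γ • ∑ j ∈ s, v j • c' j) x := by
  simp only [hasGradientAt_iff_hasFDerivAt] at *
  have hsum := HasFDerivAt.fun_sum fun j hj => (hc j hj).const_mul (v j)
  simpa [neg_smul] using (hsum.const_mul γ).const_sub b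

end

theorem flux_selfadjoint_form_general
    (n : ℕ) (γ v₀ : ℝ)
    (v : Fin n → ℝ) (Z : Fin n → ℝ) (i : Fin n)
    (D : EuclideanSpace ℝ (Fin 3) → ℝ)
    (u : EuclideanSpace ℝ (Fin 3) → ℝ)
    (c : Fin n → EuclideanSpace ℝ (Fin 3) → ℝ)
    (r : EuclideanSpace ℝ (Fin 3))
    (hu : DifferentiableAt ℝ u r)
    (hc : ∀ j, DifferentiableAt ℝ (c j) r)
    (hw : 0 < 1 - γ * ∑ j, v j * c j r)
    (J : EuclideanSpace ℝ (Fin 3))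
    (hJ : J = -(D r) • (gradient (c i) r + (Z i * c i r) • gradient u r
        + ((v i / v₀) * c i r * γ / (1 - γ * ∑ j, v j * c j r)) •
            ∑ j, v j • gradient (c j) r))
    (cbar : EuclideanSpace ℝ (Fin 3) → ℝ)
    (hcbar : cbar = fun r' => c i r' * Real.exp (Z i * u r') *
        (1 - γ * ∑ j, v j * c j r') ^ (-(v i / v₀)))
    (Dhat : ℝ)
    (hDhat : Dhat = D r * Real.exp (-(Z i * u r)) *
        (1 - γ * ∑ j, v j * c j r) ^ (v i / v₀)) :
    J = -Dhat • gradient cbar r := by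
  set W := 1 - γ * ∑ j, v j * c j r
  set a := v i / v₀
  have hgradW := HasGradientAt.const_sub_mul_sum (x := r) univ 1 γ v
    fun j _ => (hc j).hasGradientAt
  have hgrad_cbar : gradient cbar r = (Real.exp (Z i * u r) * W ^ (-a)) •
      (gradient (c i) r + (Z i * c i r) • gradient u r
        - (a * c i r / W) • (-γ • ∑ j, v j • gradient (c j) r)) := by
    rw [hcbar]
    exact ((hc i).hasGradientAt.mul_exp_const_mul_mul_rpow_neg hu.hasGradientAt hgradW
      hw.ne' (Z i) a).gradient
  have hDhat_mul : Dhat * (Real.exp (Z i * u r) * W ^ (-a)) = D r := by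
    rw [hDhat, rpow_neg hw.le, exp_neg]
    field_simp
  rw [hgrad_cbar, smul_smul, neg_mul, hDhat_mul, hJ]
  module

/-- The size-modified Nernst–Planck flux
`Jᵢ = −𝒟ᵢ [∇cᵢ + Zᵢ cᵢ ∇u + (vᵢ/v₀) cᵢ γ ∑ⱼ vⱼ ∇cⱼ / (1 − γ ∑ⱼ vⱼ cⱼ)]`
takes the self-adjoint form `Jᵢ = −𝒟̂ᵢ ∇c̄ᵢ` with the transformed diffusion coefficient
`𝒟̂ᵢ = 𝒟ᵢ e^{−Zᵢ u} (1 − γ ∑ⱼ vⱼ cⱼ)^{vᵢ/v₀}` and the Slotboom variable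
`c̄ᵢ = cᵢ e^{Zᵢ u} (1 − γ ∑ⱼ vⱼ cⱼ)^{−vᵢ/v₀}`. -/
theorem flux_selfadjoint_form
    (n : ℕ) (hn : 1 ≤ n) (γ v₀ : ℝ) (hγ : 0 < γ) (hv₀ : 0 < v₀)
    (v : Fin n → ℝ) (hv : ∀ j, 0 < v j) (Z : Fin n → ℝ) (i : Fin n)
    (D : EuclideanSpace ℝ (Fin 3) → ℝ)
    (u : EuclideanSpace ℝ (Fin 3) → ℝ)
    (c : Fin n → EuclideanSpace ℝ (Fin 3) → ℝ)
    (r : EuclideanSpace ℝ (Fin 3))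
    (hu : DifferentiableAt ℝ u r)
    (hc : ∀ j, DifferentiableAt ℝ (c j) r)
    (hci : 0 < c i r)
    (hw : 0 < 1 - γ * ∑ j, v j * c j r)
    (J : EuclideanSpace ℝ (Fin 3))
    (hJ : J = -(D r) • (gradient (c i) r + (Z i * c i r) • gradient u r
        + ((v i / v₀) * c i r * γ / (1 - γ * ∑ j, v j * c j r)) •
            ∑ j, v j • gradient (c j) r))
    (cbar : EuclideanSpace ℝ (Fin 3) → ℝ)
    (hcbar : cbar = fun r' => c i r' * Real.exp (Z i * u r') *
        (1 - γ * ∑ j, v j * c j r') ^ (-(v i / v₀)))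
    (Dhat : ℝ)
    (hDhat : Dhat = D r * Real.exp (-(Z i * u r)) *
        (1 - γ * ∑ j, v j * c j r) ^ (v i / v₀)) :
    J = -Dhat • gradient cbar r :=
  flux_selfadjoint_form_general n γ v₀ v Z i D u c r hu hc hw J hJ cbar hcbar Dhat hDhat
end
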